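/- arXiv:2212.13003 — 2 statements merged into one kernel-verified Lean document; each statement's English description precedes it below -/
import Mathlib

section
/- For all integers m ≥ 0, n ≥ 2 and s with 3 ≤ s ≤ n − 1, the K_s-structure connectivity of the DCell network satisfies κ(D_{m,n}; K_s) ≤ ⌈(n−1)/s⌉ + m. -/
/-!
The origin `0…0` of `D_{m,n}` has `n - 1 + m` neighbours: the other `n - 1` vertices of its own
copy of `K_n`, and one vertex `link m i` across each of its `m` higher-level edges. Since
`s ≤ n - 1`, the former are covered by `⌈(n - 1) / s⌉ = (n + s - 2) / s` copies of `K_s` inside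
that `K_n` which avoid the origin; each `link m i` lies in a different copy of `K_n`, and a `K_s`
through it there avoids the origin as well. Deleting these cliques isolates the origin.
-/

open SimpleGraph

/-! ## Structure connectivity -/

/-- The set of vertices covered by a family of subgraphs of `G`. -/
def SimpleGraph.cutVerts {V : Type*} {G : SimpleGraph V} (F : Finset G.Subgraph) : Set V :=
  ⋃ A ∈ F, A.verts

/-- A family `F` of subgraphs of `G` is a subgraph cut if deleting all vertices of members of `F`
leaves a graph that is disconnected or has at most one vertex. -/
def SimpleGraph.IsSubgraphCut {V : Type*} (G : SimpleGraph V) (F : Finset G.Subgraph) : Prop :=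
  ¬ (G.induce (SimpleGraph.cutVerts F)ᶜ).Connected ∨ ((SimpleGraph.cutVerts F)ᶜ : Set V).Subsingleton

/-- An `H`-structure cut of `G`: a subgraph cut all of whose members are isomorphic to `H`. -/
def SimpleGraph.IsStructureCut {V W : Type*} (G : SimpleGraph V) (H : SimpleGraph W)
    (F : Finset G.Subgraph) : Prop :=
  G.IsSubgraphCut F ∧ ∀ A ∈ F, Nonempty (A.coe ≃g H)

/-- An `H`-substructure cut of `G`: a subgraph cut all of whose members are isomorphic to a
connected subgraph of `H`. -/
def SimpleGraph.IsSubstructureCut {V W : Type*} (G : SimpleGraph V) (H : SimpleGraph W)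
    (F : Finset G.Subgraph) : Prop :=
  G.IsSubgraphCut F ∧ ∀ A ∈ F, ∃ K : H.Subgraph, K.Connected ∧ Nonempty (A.coe ≃g K.coe)

/-- The `H`-structure connectivity `κ(G; H)`. -/
noncomputable def SimpleGraph.structConn {V W : Type*} (G : SimpleGraph V) (H : SimpleGraph W) : ℕ :=
  sInf {k | ∃ F : Finset G.Subgraph, G.IsStructureCut H F ∧ F.card = k}

/-- The `H`-substructure connectivity `κˢ(G; H)`. -/
noncomputable def SimpleGraph.substructConn {V W : Type*} (G : SimpleGraph V) (H : SimpleGraph W) : ℕ :=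
  sInf {k | ∃ F : Finset G.Subgraph, G.IsSubstructureCut H F ∧ F.card = k}

/-- The star `K_{1,t}` with center `0` and `t` leaves. -/
def starGraph (t : ℕ) : SimpleGraph (Fin (t + 1)) :=
  SimpleGraph.fromRel (fun i _ => i = 0)
/-! ## The DCell network -/

/-- `tcell n m` is the number of servers of the `m`-dimensional DCell with `n`-port switches. -/
def tcell (n : ℕ) : ℕ → ℕ
  | 0 => n
  | m + 1 => tcell n m * (tcell n m + 1)

/-- Vertices (labels `x_m x_{m-1} … x_0`) of the `m`-dimensional DCell with `n`-port switches. -/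
def DCellVertex (n : ℕ) : ℕ → Type
  | 0 => Fin n
  | m + 1 => Fin (tcell n m + 1) × DCellVertex n m

/-- The numerical identifier `x_0 + Σ_{j=1}^{m} x_j · t_{j-1,n}` of a vertex of `D_{m,n}`. -/
def DCellCode (n : ℕ) : (m : ℕ) → DCellVertex n m → ℕ
  | 0, x => Fin.val x
  | m + 1, x => DCellCode n m x.2 + (Fin.val x.1) * tcell n m

/-- The `m`-dimensional DCell with `n`-port switches `D_{m,n}`. -/
def DCell (n : ℕ) : (m : ℕ) → SimpleGraph (DCellVertex n m)
  | 0 => (⊤ : SimpleGraph (Fin n))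
  | m + 1 => SimpleGraph.fromRel (fun u v =>
      (u.1 = v.1 ∧ (DCell n m).Adj u.2 v.2) ∨
      ((u.1 : ℕ) < (v.1 : ℕ) ∧ (u.1 : ℕ) = DCellCode n m v.2 ∧
        (v.1 : ℕ) = DCellCode n m u.2 + 1))

namespace SimpleGraph

variable {V W : Type*} {G : SimpleGraph V}

theorem IsNClique.nonempty_induce_iso_top {s : ℕ} {S : Finset V} (h : G.IsNClique s S) :
    Nonempty (((⊤ : G.Subgraph).induce (S : Set V)).coe ≃g (⊤ : SimpleGraph (Fin s))) := by
  rw [← induce_eq_coe_induce_top, induce_eq_top.mpr h.isClique]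
  exact ⟨Iso.completeGraph (S.equivFinOfCardEq h.card_eq)⟩

theorem isSubgraphCut_of_neighborSet_subset {F : Finset G.Subgraph} {v : V}
    (hv : v ∉ cutVerts F) (hN : G.neighborSet v ⊆ cutVerts F) : G.IsSubgraphCut F := by
  rw [IsSubgraphCut, or_iff_not_imp_right, Set.not_subsingleton_iff]
  rintro ⟨a, ha, b, hb, hab⟩ hconn
  obtain ⟨w, hw, hwv⟩ : ∃ w ∈ (cutVerts F)ᶜ, w ≠ v := by
    by_cases hav : a = v
    · exact ⟨b, hb, fun hbv => hab (hav.trans hbv.symm)⟩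
    · exact ⟨a, ha, hav⟩
  obtain ⟨p⟩ := hconn.preconnected ⟨v, hv⟩ ⟨w, hw⟩
  cases p with
  | nil => exact hwv rfl
  | cons hadj _ => exact (Set.mem_compl_iff _ _).mp (Subtype.prop _) (hN hadj)

theorem structConn_le_of_isolates {H : SimpleGraph W} (A : ℕ → G.Subgraph) (k : ℕ) (v : V)
    (hA : ∀ j < k, Nonempty ((A j).coe ≃g H)) (hv : ∀ j < k, v ∉ (A j).verts)
    (hN : ∀ w, G.Adj v w → ∃ j < k, w ∈ (A j).verts) : G.structConn H ≤ k := by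
  classical
  set F := (Finset.range k).image A
  have mem_cutVerts : ∀ x, x ∈ cutVerts F ↔ ∃ j < k, x ∈ (A j).verts := by
    simp [F, cutVerts]
  have hcut : G.IsStructureCut H F := by
    refine ⟨isSubgraphCut_of_neighborSet_subset (v := v) ?_ ?_, ?_⟩
    · simpa [mem_cutVerts] using hv
    · exact fun w hw => (mem_cutVerts w).mpr (hN w hw)
    · simpa [F] using hA
  calc G.structConn H ≤ F.card := Nat.sInf_le ⟨F, hcut, rfl⟩
    _ ≤ k := Finset.card_image_le.trans (Finset.card_range k).le

end SimpleGraph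

/-- The `j`-th of `⌈(n - 1) / s⌉` windows of `s` consecutive elements covering `{1, …, n - 1}`;
the last window is shifted down so that it ends at `n - 1`. -/
def window {n : ℕ} (s j : ℕ) (h : s < n) : Finset (Fin n) :=
  Finset.Ioc ⟨min (j * s) (n - 1 - s), by omega⟩ ⟨min (j * s) (n - 1 - s) + s, by omega⟩

section window

variable {n s : ℕ} (h : s < n)

theorem card_window (j : ℕ) : (window s j h).card = s := by
  rw [window, Fin.card_Ioc, Fin.val_mk, Fin.val_mk]
  omega

theorem zero_notMem_window [NeZero n] (j : ℕ) : (0 : Fin n) ∉ window s j h := by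
  simp [window]

theorem exists_mem_window [NeZero n] (hs : 0 < s) {c : Fin n} (hc : c ≠ 0) :
    ∃ j < (n + s - 2) / s, c ∈ window s j h := by
  have hc : 0 < (c : ℕ) := Fin.pos_iff_ne_zero.mpr hc
  have hcn := c.isLt
  refine ⟨((c : ℕ) - 1) / s, ?_, ?_⟩
  · calc ((c : ℕ) - 1) / s ≤ (n - 2) / s := Nat.div_le_div_right (by omega)
      _ < (n - 2) / s + 1 := Nat.lt_succ_self _
      _ = (n + s - 2) / s := by rw [← Nat.add_div_right _ hs]; congr 1; omega
  · have hdiv := Nat.div_add_mod ((c : ℕ) - 1) s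
    have hmod := Nat.mod_lt ((c : ℕ) - 1) hs
    have hcomm := Nat.mul_comm (((c : ℕ) - 1) / s) s
    simp only [window, Finset.mem_Ioc, Fin.lt_def, Fin.le_def]
    omega

end window

theorem tcell_pos {n : ℕ} [NeZero n] : ∀ m, 0 < tcell n m
  | 0 => Nat.pos_of_neZero n
  | m + 1 => Nat.mul_pos (tcell_pos m) (tcell n m).succ_pos

namespace DCellVertex

variable {n : ℕ}

instance instDecidableEq : ∀ {m : ℕ}, DecidableEq (DCellVertex n m)
  | 0 => inferInstanceAs (DecidableEq (Fin n))
  | _ + 1 => @instDecidableEqProd _ _ _ instDecidableEq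

/-- The vertices `v.setLast c` form the copy of `K_n` containing `v`. -/
def setLast : {m : ℕ} → DCellVertex n m → Fin n → DCellVertex n m
  | 0, _, c => c
  | _ + 1, v, c => (v.1, setLast v.2 c)

def last : {m : ℕ} → DCellVertex n m → Fin n
  | 0, v => v
  | _ + 1, v => last v.2

@[simp]
theorem last_setLast : ∀ {m : ℕ} (v : DCellVertex n m) (c : Fin n), (v.setLast c).last = c
  | 0, _, _ => rfl
  | _ + 1, v, c => last_setLast v.2 c

theorem setLast_injective {m : ℕ} (v : DCellVertex n m) : Function.Injective v.setLast :=
  Function.LeftInverse.injective (g := last) (last_setLast v)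

variable [NeZero n]

def origin : (m : ℕ) → DCellVertex n m
  | 0 => (0 : Fin n)
  | m + 1 => (0, origin m)

theorem setLast_origin_zero : ∀ m, (origin m).setLast (0 : Fin n) = origin m
  | 0 => rfl
  | m + 1 => congrArg (Prod.mk 0) (setLast_origin_zero m)

theorem code_eq_zero_iff : ∀ {m : ℕ} {x : DCellVertex n m}, DCellCode n m x = 0 ↔ x = origin m
  | 0, x => (Fin.ext_iff (b := (0 : Fin n))).symm
  | m + 1, ⟨a, b⟩ => by
    have ht := (tcell_pos (n := n) m).ne'
    change DCellCode n m b + a * tcell n m = 0 ↔ (a, b) = (0, origin m)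
    rw [Nat.add_eq_zero_iff, code_eq_zero_iff, mul_eq_zero, or_iff_left ht, Prod.mk.injEq,
      Fin.ext_iff, Fin.val_zero, and_comm]

/-- For `i < m`, `link m i` is the neighbour of the origin through its level-`(m - i)` edge. -/
def link : (m i : ℕ) → DCellVertex n m
  | 0, _ => (0 : Fin n)
  | m + 1, 0 => (⟨1, Nat.succ_lt_succ (tcell_pos m)⟩, origin m)
  | m + 1, i + 1 => (0, link m i)

theorem setLast_link_zero : ∀ m i, (link m i).setLast (0 : Fin n) = link m i
  | 0, _ => rfl
  | m + 1, 0 => congrArg (Prod.mk _) (setLast_origin_zero m)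
  | m + 1, i + 1 => congrArg (Prod.mk 0) (setLast_link_zero m i)

theorem setLast_link_ne_origin : ∀ {m i : ℕ}, i < m → ∀ c : Fin n, (link m i).setLast c ≠ origin m
  | m + 1, 0, _, c, h => by simpa [link, setLast, origin, Fin.ext_iff] using congrArg Prod.fst h
  | m + 1, i + 1, hi, c, h =>
    setLast_link_ne_origin (Nat.lt_of_succ_lt_succ hi) c (congrArg Prod.snd h)

end DCellVertex

namespace DCell

open DCellVertex

variable {n m s : ℕ}

theorem adj_setLast : ∀ {m : ℕ} (v : DCellVertex n m) {c d : Fin n}, c ≠ d →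
    (DCell n m).Adj (v.setLast c) (v.setLast d)
  | 0, _, _, _, h => h
  | m + 1, v, c, d, h => by
    refine (fromRel_adj ..).mpr ⟨fun he => h ?_, .inl (.inl ⟨rfl, adj_setLast v.2 h⟩)⟩
    exact v.2.setLast_injective (congrArg Prod.snd he)

theorem isNClique_image_setLast (v : DCellVertex n m) (B : Finset (Fin n)) :
    (DCell n m).IsNClique B.card (B.image v.setLast) := by
  refine ⟨?_, Finset.card_image_of_injective B v.setLast_injective⟩
  rintro _ hx _ hy hxy
  obtain ⟨c, -, rfl⟩ := Finset.mem_image.mp hx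
  obtain ⟨d, -, rfl⟩ := Finset.mem_image.mp hy
  exact adj_setLast v fun hcd => hxy (hcd ▸ rfl)

def baseClique (v : DCellVertex n m) (B : Finset (Fin n)) : (DCell n m).Subgraph :=
  (⊤ : (DCell n m).Subgraph).induce ↑(B.image v.setLast)

@[simp]
theorem mem_baseClique_verts {v x : DCellVertex n m} {B : Finset (Fin n)} :
    x ∈ (baseClique v B).verts ↔ ∃ c ∈ B, v.setLast c = x := by
  simp [baseClique]

theorem baseClique_iso (v : DCellVertex n m) {B : Finset (Fin n)} (hB : B.card = s) :
    Nonempty ((baseClique v B).coe ≃g (⊤ : SimpleGraph (Fin s))) :=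
  hB ▸ (isNClique_image_setLast v B).nonempty_induce_iso_top

variable [NeZero n]

theorem adj_origin : ∀ {m : ℕ} {x : DCellVertex n m}, (DCell n m).Adj (origin m) x →
    (∃ c ≠ 0, x = (origin m).setLast c) ∨ ∃ i < m, x = link m i
  | 0, x, h => .inl ⟨x, fun hx => h.ne (hx ▸ rfl), rfl⟩
  | m + 1, ⟨a, b⟩, h => by
    have prepend_zero : (∃ c ≠ 0, b = (origin m).setLast c) ∨ (∃ i < m, b = link m i) →
        (∃ c ≠ 0, ((0 : Fin _), b) = (origin (m + 1)).setLast c) ∨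
          ∃ i < m + 1, ((0 : Fin _), b) = link (m + 1) i := by
      rintro (⟨c, hc, rfl⟩ | ⟨i, hi, rfl⟩)
      · exact .inl ⟨c, hc, rfl⟩
      · exact .inr ⟨i + 1, by omega, rfl⟩
    -- inside the copy `0` (both orientations), the level-`(m + 1)` edge leaving the origin, or an
    -- edge from a copy below `0`
    obtain ⟨-, (⟨ha, hb⟩ | ⟨-, hb, ha⟩) | (⟨ha, hb⟩ | ⟨ha, -, -⟩)⟩ := (fromRel_adj ..).mp h
    · obtain rfl : a = 0 := ha.symm
      exact prepend_zero (adj_origin hb)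
    · obtain rfl : b = origin m := code_eq_zero_iff.mp hb.symm
      refine .inr ⟨0, m.succ_pos, ?_⟩
      have ha : (a : ℕ) = DCellCode n m (origin m) + 1 := ha
      rw [code_eq_zero_iff.mpr rfl] at ha
      exact congrArg (·, origin m) (Fin.ext ha)
    · obtain rfl : a = 0 := ha
      exact prepend_zero (adj_origin hb.symm)
    · exact absurd ha (Nat.not_lt_zero _)

/-- The first `⌈(n - 1) / s⌉` members cover the neighbours of the origin inside its own `K_n`;
each of the remaining `m` members is a `K_s` through one `link m i`, in that vertex's `K_n`. -/
def originCut (m s : ℕ) (h : s < n) (j : ℕ) : (DCell n m).Subgraph :=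
  if j < (n + s - 2) / s then baseClique (origin m) (window s j h)
  else baseClique (link m (j - (n + s - 2) / s)) (Finset.Iic ⟨s - 1, by omega⟩)

theorem originCut_iso (h : s < n) (hs : 0 < s) (j : ℕ) :
    Nonempty ((originCut m s h j).coe ≃g (⊤ : SimpleGraph (Fin s))) := by
  by_cases hj : j < (n + s - 2) / s
  · rw [originCut, if_pos hj]
    exact baseClique_iso _ (card_window h j)
  · rw [originCut, if_neg hj]
    exact baseClique_iso _ (by rw [Fin.card_Iic, Fin.val_mk]; omega)

theorem origin_notMem_originCut (h : s < n) {j : ℕ} (hj : j < (n + s - 2) / s + m) :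
    origin m ∉ (originCut m s h j).verts := by
  unfold originCut
  split_ifs with hjq <;> rw [mem_baseClique_verts] <;> rintro ⟨c, hc, hco⟩
  · have hc0 := setLast_injective _ (hco.trans (setLast_origin_zero m).symm)
    exact zero_notMem_window h j (hc0 ▸ hc)
  · exact setLast_link_ne_origin (by omega) c hco

theorem exists_originCut_of_adj (h : s < n) (hs : 0 < s) {x : DCellVertex n m}
    (hx : (DCell n m).Adj (origin m) x) :
    ∃ j < (n + s - 2) / s + m, x ∈ (originCut m s h j).verts := by
  rcases adj_origin hx with ⟨c, hc, rfl⟩ | ⟨i, hi, rfl⟩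
  · obtain ⟨j, hj, hcj⟩ := exists_mem_window h hs hc
    refine ⟨j, by omega, ?_⟩
    rw [originCut, if_pos hj, mem_baseClique_verts]
    exact ⟨c, hcj, rfl⟩
  · refine ⟨(n + s - 2) / s + i, by omega, ?_⟩
    rw [originCut, if_neg (by omega), Nat.add_sub_cancel_left, mem_baseClique_verts]
    exact ⟨0, Finset.mem_Iic.mpr (Fin.zero_le _), setLast_link_zero m i⟩

end DCell

open DCell DCellVertex in
theorem dcell_complete_structConn_upper_general (m n s : ℕ) (hs1 : 3 ≤ s)
    (hs2 : s ≤ n - 1) :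
    (DCell n m).structConn (⊤ : SimpleGraph (Fin s)) ≤ (n + s - 2) / s + m := by
  have h : s < n := by omega
  have hs : 0 < s := by omega
  have : NeZero n := ⟨by omega⟩
  exact structConn_le_of_isolates (originCut m s h) _ (origin m)
    (fun j _ => originCut_iso h hs j) (fun _ hj => origin_notMem_originCut h hj)
    (fun _ hx => exists_originCut_of_adj h hs hx)

/-- For all integers `m ≥ 0`, `n ≥ 2` and `3 ≤ s ≤ n - 1`,
`κ(D_{m,n}; K_s) ≤ ⌈(n-1)/s⌉ + m`. -/
theorem dcell_complete_structConn_upper (m n s : ℕ) (hn : 2 ≤ n) (hs1 : 3 ≤ s)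
    (hs2 : s ≤ n - 1) :
    (DCell n m).structConn (⊤ : SimpleGraph (Fin s)) ≤ (n + s - 2) / s + m :=
  dcell_complete_structConn_upper_general m n s hs1 hs2
end

section
/- For all integers m ≥ 0, n ≥ 2 and s with 3 ≤ s ≤ n − 1, the complete-graph-structure connectivity of the DCell network satisfies κ(D_{m,n}; K_s) = ⌈(n−1)/s⌉ + m. -/
/-!
Upper bound: the vertex `0…0` of `D_{m,n}` has `n - 1` neighbours in its own copy of `K_n`, which
`⌈(n-1)/s⌉` copies of `K_s` inside that copy cover without touching `0…0`, and one neighbour on each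
of the `m` levels outside it, each covered by a `K_s` inside that neighbour's own copy of `K_n`.
Deleting these cliques isolates `0…0`.

Lower bound, by induction on `m`: every vertex of `D_{m+1,n}` has exactly one neighbour outside its
copy of `D_{m,n}`, so a clique on at least three vertices lies inside a single copy. Delete at most
`b + 1` such cliques, where `s b + 2 ≤ t_{m,n}`. Then at least two copies are untouched, any two
copies are joined by an edge, and every copy containing at most `b` of the cliques stays connected
by induction. Counting cross edges shows that the surviving part of such a copy has a vertex with
a neighbour in an untouched copy; in a copy containing all the cliques, every vertex has one.
-/

open SimpleGraph

namespace SimpleGraph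

variable {V : Type*} {G : SimpleGraph V} {s b : ℕ}

def uncovered (L : Finset (Finset V)) : Set V := {v | ∀ S ∈ L, v ∉ S}

@[simp] lemma mem_uncovered {L : Finset (Finset V)} {v : V} :
    v ∈ uncovered L ↔ ∀ S ∈ L, v ∉ S := Iff.rfl

def ConnectedAfterDeleting (G : SimpleGraph V) (L : Finset (Finset V)) : Prop :=
  (G.induce (uncovered L)).Connected ∧ (uncovered L).Nontrivial

def CliqueResilient (G : SimpleGraph V) (s b : ℕ) : Prop :=
  ∀ L : Finset (Finset V), (∀ S ∈ L, G.IsNClique s S) → L.card ≤ b → G.ConnectedAfterDeleting L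

lemma structConn_eq_of_forall_le {W : Type*} {H : SimpleGraph W} {k : ℕ}
    (hcut : ∃ F, G.IsStructureCut H F ∧ F.card ≤ k)
    (hle : ∀ F, G.IsStructureCut H F → k ≤ F.card) : G.structConn H = k := by
  obtain ⟨F, hF, hFk⟩ := hcut
  have hmem : F.card ∈ {k | ∃ F : Finset G.Subgraph, G.IsStructureCut H F ∧ F.card = k} :=
    ⟨F, hF, rfl⟩
  refine le_antisymm ((Nat.sInf_le hmem).trans hFk) ?_
  obtain ⟨F', hF', hcard⟩ := Nat.sInf_mem ⟨_, hmem⟩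
  exact (hle F' hF').trans_eq hcard

lemma IsNClique.nonempty_iso_induce {S : Finset V} (h : G.IsNClique s S) :
    Nonempty (((⊤ : G.Subgraph).induce (S : Set V)).coe ≃g (⊤ : SimpleGraph (Fin s))) := by
  rw [← induce_eq_coe_induce_top, induce_eq_top.mpr h.isClique]
  exact ⟨Iso.completeGraph (S.equivFinOfCardEq h.card_eq)⟩

lemma isNClique_toFinset_of_iso [Finite V] {A : G.Subgraph}
    (e : A.coe ≃g (⊤ : SimpleGraph (Fin s))) : G.IsNClique s A.verts.toFinite.toFinset := by
  refine ⟨fun a ha b hb hab => ?_, ?_⟩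
  · rw [Finset.mem_coe, Set.Finite.mem_toFinset] at ha hb
    have : A.coe.Adj ⟨a, ha⟩ ⟨b, hb⟩ :=
      e.map_adj_iff.mp ((top_adj _ _).mpr (e.injective.ne (by simpa using hab)))
    exact A.adj_sub this
  · rw [← Set.ncard_eq_toFinset_card, ← Nat.card_coe_set_eq, Nat.card_congr e.toEquiv,
      Nat.card_eq_fintype_card, Fintype.card_fin]

lemma isNClique_map_top {W : Type*} (e : (⊤ : SimpleGraph W) ↪g G) {T : Finset W}
    (hT : T.card = s) : G.IsNClique s (T.map e.toEmbedding) := by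
  refine ⟨?_, by rw [Finset.card_map, hT]⟩
  rw [Finset.coe_map]
  rintro _ ⟨a, -, rfl⟩ _ ⟨b, -, rfl⟩ hab
  exact e.map_adj_iff.mpr ((top_adj _ _).mpr fun h => hab (h ▸ rfl))

lemma CliqueResilient.lt_card [Finite V] (hG : G.CliqueResilient s b) {F : Finset G.Subgraph}
    (hF : G.IsStructureCut (⊤ : SimpleGraph (Fin s)) F) : b < F.card := by
  classical
  by_contra! hle
  set L := F.image fun A => A.verts.toFinite.toFinset
  have hL : ∀ S ∈ L, G.IsNClique s S := by
    simp only [L, Finset.mem_image]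
    rintro _ ⟨A, hA, rfl⟩
    exact isNClique_toFinset_of_iso (hF.2 A hA).some
  have hunc : uncovered L = (cutVerts F)ᶜ := by
    ext v
    simp [L, cutVerts]
  obtain ⟨hconn, hnt⟩ := hG L hL (Finset.card_image_le.trans hle)
  rw [hunc] at hconn hnt
  rcases hF.1 with h | h
  · exact h hconn
  · exact Set.not_nontrivial_iff.mpr h hnt

lemma not_connected_or_subsingleton_of_isolated {X : Set V} {z : V} (hz : z ∈ X)
    (hN : ∀ v, G.Adj z v → v ∉ X) : ¬ (G.induce X).Connected ∨ X.Subsingleton := by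
  by_cases hX : X.Subsingleton
  · exact Or.inr hX
  obtain ⟨w, hw, hwz⟩ := (Set.not_subsingleton_iff.mp hX).exists_ne z
  refine Or.inl fun hconn => ?_
  obtain ⟨p⟩ := hconn.preconnected ⟨z, hz⟩ ⟨w, hw⟩
  cases p with
  | nil => exact hwz rfl
  | cons h _ => exact hN _ h (Subtype.prop _)

lemma exists_isStructureCut_of_isolated {L : Finset (Finset V)} (hL : ∀ S ∈ L, G.IsNClique s S)
    {z : V} (hz : z ∈ uncovered L) (hN : ∀ v, G.Adj z v → v ∉ uncovered L) :
    ∃ F, G.IsStructureCut (⊤ : SimpleGraph (Fin s)) F ∧ F.card ≤ L.card := by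
  classical
  set F := L.image fun S : Finset V => (⊤ : G.Subgraph).induce (S : Set V)
  have hunc : (cutVerts F)ᶜ = uncovered L := by
    ext v
    simp [F, cutVerts]
  refine ⟨F, ⟨?_, ?_⟩, Finset.card_image_le⟩
  · rw [IsSubgraphCut, hunc]
    exact not_connected_or_subsingleton_of_isolated hz hN
  · simp only [F, Finset.mem_image]
    rintro _ ⟨S, hS, rfl⟩
    exact (hL S hS).nonempty_iso_induce

lemma connectedAfterDeleting_top [Fintype V] [DecidableEq V] {L : Finset (Finset V)}
    (hL : (L.biUnion id).card + 2 ≤ Fintype.card V) :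
    (⊤ : SimpleGraph V).ConnectedAfterDeleting L := by
  have hunc : uncovered L = ↑(L.biUnion id)ᶜ := by
    ext v
    simp
  have hnt : (uncovered L).Nontrivial := by
    rw [hunc, Finset.nontrivial_coe, ← Finset.one_lt_card_iff_nontrivial, Finset.card_compl]
    omega
  have := hnt.nonempty.to_subtype
  exact ⟨by rw [induce_top]; exact connected_top, hnt⟩

end SimpleGraph

open SimpleGraph

section DCellVertex

variable {n m s : ℕ}

lemma le_tcell : ∀ m, n ≤ tcell n m
  | 0 => le_rfl
  | m + 1 => (le_tcell m).trans (Nat.le_mul_of_pos_right _ (Nat.succ_pos _))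

instance DCellVertex.instDecidableEq_s5 : ∀ m, DecidableEq (DCellVertex n m)
  | 0 => inferInstanceAs (DecidableEq (Fin n))
  | m + 1 => @instDecidableEqProd _ _ _ (DCellVertex.instDecidableEq_s5 m)

instance DCellVertex.instFintype : ∀ m, Fintype (DCellVertex n m)
  | 0 => inferInstanceAs (Fintype (Fin n))
  | m + 1 => @instFintypeProd _ _ _ (DCellVertex.instFintype m)

def dcellCodeEquiv : ∀ m, DCellVertex n m ≃ Fin (tcell n m)
  | 0 => Equiv.refl (Fin n)
  | m + 1 => ((Equiv.refl _).prodCongr (dcellCodeEquiv m)).trans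
      (finProdFinEquiv.trans (finCongr (Nat.mul_comm _ _)))

lemma dcellCodeEquiv_val : ∀ m (x : DCellVertex n m), (dcellCodeEquiv m x : ℕ) = DCellCode n m x
  | 0, _ => rfl
  | m + 1, x => by
    show (dcellCodeEquiv m x.2 : ℕ) + tcell n m * x.1 = DCellCode n m x.2 + x.1 * tcell n m
    rw [dcellCodeEquiv_val, Nat.mul_comm]

lemma dcellCode_lt (x : DCellVertex n m) : DCellCode n m x < tcell n m :=
  dcellCodeEquiv_val m x ▸ (dcellCodeEquiv m x).isLt

lemma dcellCode_injective : Function.Injective (DCellCode n m) := fun x y h =>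
  (dcellCodeEquiv m).injective (Fin.ext (by rw [dcellCodeEquiv_val, dcellCodeEquiv_val, h]))

lemma exists_dcellCode_eq {c : ℕ} (hc : c < tcell n m) : ∃ x, DCellCode n m x = c :=
  ⟨(dcellCodeEquiv m).symm ⟨c, hc⟩, by rw [← dcellCodeEquiv_val, Equiv.apply_symm_apply]⟩

lemma card_dcellVertex : Fintype.card (DCellVertex n m) = tcell n m := by
  rw [Fintype.card_congr (dcellCodeEquiv m), Fintype.card_fin]

lemma mul_add_two_le_tcell (hs : 0 < s) (hsn : s < n) :
    ∀ m, s * ((n + s - 2) / s - 1 + m) + 2 ≤ tcell n m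
  | 0 => by
    have h1 := Nat.div_mul_le_self (n + s - 2) s
    have h2 : s * ((n + s - 2) / s - 1 + 0) = (n + s - 2) / s * s - s := by
      rw [add_zero, Nat.mul_sub_one, Nat.mul_comm]
    show _ ≤ n
    omega
  | m + 1 => by
    have ih := mul_add_two_le_tcell hs hsn m
    have hst : s ≤ tcell n m := hsn.le.trans (le_tcell m)
    show s * ((n + s - 2) / s - 1 + m + 1) + 2 ≤ tcell n m * (tcell n m + 1)
    nlinarith

end DCellVertex

section CoverBlock

variable {n s : ℕ}

-- The blocks `{rs + 1, …, rs + s}`, shifted down when needed so as to stay inside `{1, …, n - 1}`.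
def coverBlock (hsn : s < n) (r : ℕ) : Finset (Fin n) :=
  Finset.univ.map ⟨fun t : Fin s => ⟨min (r * s) (n - 1 - s) + t + 1, by have := t.isLt; omega⟩,
    fun a b h => Fin.ext (by have := congrArg Fin.val h; simp at this; omega)⟩

lemma card_coverBlock (hsn : s < n) (r : ℕ) : (coverBlock hsn r).card = s := by
  simp [coverBlock]

lemma val_ne_zero_of_mem_coverBlock {hsn : s < n} {r : ℕ} {x : Fin n}
    (hx : x ∈ coverBlock hsn r) : (x : ℕ) ≠ 0 := by
  obtain ⟨t, -, rfl⟩ := Finset.mem_map.mp hx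
  simp

lemma exists_mem_coverBlock (hs : 0 < s) (hsn : s < n) {x : Fin n} (hx : (x : ℕ) ≠ 0) :
    ∃ r < (n + s - 2) / s, x ∈ coverBlock hsn r := by
  have h1 := Nat.div_mul_le_self (x - 1) s
  have h2 := Nat.lt_div_mul_add (a := x - 1) hs
  have hxn := x.isLt
  refine ⟨(x - 1) / s, (Nat.le_div_iff_mul_le hs).mpr ?_, Finset.mem_map.mpr
    ⟨⟨x - 1 - min ((x - 1) / s * s) (n - 1 - s), by omega⟩, Finset.mem_univ _, Fin.ext ?_⟩⟩
  · rw [Nat.succ_mul]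
    omega
  · show min _ _ + (x - 1 - min _ _) + 1 = (x : ℕ)
    omega

end CoverBlock

namespace DCell

variable {n m s b : ℕ}

lemma adj_succ_iff {u v : DCellVertex n (m + 1)} :
    (DCell n (m + 1)).Adj u v ↔ u ≠ v ∧
      ((u.1 = v.1 ∧ (DCell n m).Adj u.2 v.2 ∨
        (u.1 : ℕ) < v.1 ∧ (u.1 : ℕ) = DCellCode n m v.2 ∧ (v.1 : ℕ) = DCellCode n m u.2 + 1) ∨
       (v.1 = u.1 ∧ (DCell n m).Adj v.2 u.2 ∨
        (v.1 : ℕ) < u.1 ∧ (v.1 : ℕ) = DCellCode n m u.2 ∧ (u.1 : ℕ) = DCellCode n m v.2 + 1)) := by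
  rw [DCell, fromRel_adj]

lemma adj_mk_mk_same_iff {i : Fin (tcell n m + 1)} {x y : DCellVertex n m} :
    (DCell n (m + 1)).Adj (i, x) (i, y) ↔ (DCell n m).Adj x y := by
  refine adj_succ_iff.trans ?_
  simp only [true_and, lt_self_iff_false, false_and, or_false]
  exact ⟨fun h => h.2.elim id Adj.symm, fun h => ⟨fun he => h.ne (congrArg Prod.snd he), Or.inl h⟩⟩

lemma adj_mk_mk_iff_of_ne {i j : Fin (tcell n m + 1)} (hij : i ≠ j) {x y : DCellVertex n m} :
    (DCell n (m + 1)).Adj (i, x) (j, y) ↔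
      ((i : ℕ) < j ∧ (i : ℕ) = DCellCode n m y ∧ (j : ℕ) = DCellCode n m x + 1) ∨
      ((j : ℕ) < i ∧ (j : ℕ) = DCellCode n m x ∧ (i : ℕ) = DCellCode n m y + 1) := by
  refine adj_succ_iff.trans ((and_iff_right fun h => hij (congrArg Prod.fst h)).trans ?_)
  simp [hij, Ne.symm hij]

-- The copy `D^i_{m,n}` of `D_{m,n}` inside `D_{m+1,n}`; these copies are called cells below.
def cellEmbedding (i : Fin (tcell n m + 1)) : DCell n m ↪g DCell n (m + 1) where
  toFun := Prod.mk i
  inj' := Prod.mk_right_injective i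
  map_rel_iff' := adj_mk_mk_same_iff

lemma eq_of_adj_of_adj_of_fst_ne {u v w : DCellVertex n (m + 1)} (hv : (DCell n (m + 1)).Adj u v)
    (hw : (DCell n (m + 1)).Adj u w) (hvu : v.1 ≠ u.1) (hwu : w.1 ≠ u.1) : v = w := by
  obtain ⟨i, x⟩ := u
  obtain ⟨j, y⟩ := v
  obtain ⟨k, z⟩ := w
  dsimp only at hvu hwu
  rw [adj_mk_mk_iff_of_ne (Ne.symm hvu)] at hv
  rw [adj_mk_mk_iff_of_ne (Ne.symm hwu)] at hw
  have hjk : j = k := Fin.ext (by omega)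
  have hyz : y = z := dcellCode_injective (by omega)
  rw [hjk, hyz]

lemma eq_of_adj_mk_of_adj_mk {i j : Fin (tcell n m + 1)} {x x' y y' : DCellVertex n m}
    (h : (DCell n (m + 1)).Adj (i, x) (j, y)) (h' : (DCell n (m + 1)).Adj (i, x') (j, y'))
    (hij : i ≠ j) : x = x' := by
  rw [adj_mk_mk_iff_of_ne hij] at h h'
  exact dcellCode_injective (by omega)

lemma exists_adj_fst_ne (u : DCellVertex n (m + 1)) :
    ∃ v, (DCell n (m + 1)).Adj u v ∧ v.1 ≠ u.1 := by
  obtain ⟨i, x⟩ := u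
  have hx := dcellCode_lt x
  have hi := i.isLt
  by_cases hix : (i : ℕ) ≤ DCellCode n m x
  · obtain ⟨y, hy⟩ := exists_dcellCode_eq (n := n) (m := m) (c := i) (by omega)
    have hne : i ≠ ⟨DCellCode n m x + 1, by omega⟩ := fun h => by
      have := congrArg Fin.val h; simp at this; omega
    exact ⟨(⟨DCellCode n m x + 1, by omega⟩, y),
      (adj_mk_mk_iff_of_ne hne).mpr (Or.inl ⟨by simp; omega, hy.symm, rfl⟩), Ne.symm hne⟩
  · obtain ⟨y, hy⟩ := exists_dcellCode_eq (n := n) (m := m) (c := i - 1) (by omega)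
    have hne : i ≠ ⟨DCellCode n m x, by omega⟩ := fun h => by
      have := congrArg Fin.val h; simp at this; omega
    exact ⟨(⟨DCellCode n m x, by omega⟩, y),
      (adj_mk_mk_iff_of_ne hne).mpr (Or.inr ⟨by simp; omega, rfl, by omega⟩), Ne.symm hne⟩

lemma exists_adj_mk_mk_of_ne {i j : Fin (tcell n m + 1)} (hij : i ≠ j) :
    ∃ x y, (DCell n (m + 1)).Adj (i, x) (j, y) := by
  wlog hlt : i < j generalizing i j
  · obtain ⟨x, y, h⟩ := this (Ne.symm hij) (lt_of_le_of_ne (not_lt.mp hlt) (Ne.symm hij))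
    exact ⟨y, x, h.symm⟩
  have hj := j.isLt
  obtain ⟨x, hx⟩ := exists_dcellCode_eq (n := n) (m := m) (c := j - 1) (by omega)
  obtain ⟨y, hy⟩ := exists_dcellCode_eq (n := n) (m := m) (c := i) (by omega)
  exact ⟨x, y, (adj_mk_mk_iff_of_ne hij).mpr (Or.inl ⟨hlt, hy.symm, by omega⟩)⟩

lemma fst_eq_of_isClique {S : Finset (DCellVertex n (m + 1))}
    (hS : (DCell n (m + 1)).IsClique (S : Set _)) (h3 : 3 ≤ S.card) {u v : DCellVertex n (m + 1)}
    (hu : u ∈ S) (hv : v ∈ S) : u.1 = v.1 := by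
  by_contra huv
  have huv' : u ≠ v := fun h => huv (h ▸ rfl)
  obtain ⟨w, hw, hwv⟩ : ∃ w ∈ S.erase u, w ≠ v :=
    Finset.exists_mem_ne (by rw [Finset.card_erase_of_mem hu]; omega) v
  obtain ⟨hwu, hw⟩ := Finset.mem_erase.mp hw
  by_cases hwu1 : w.1 = u.1
  · exact hwu (eq_of_adj_of_adj_of_fst_ne (hS hv hw (Ne.symm hwv)) (hS hv hu (Ne.symm huv'))
      (by rw [hwu1]; exact huv) huv)
  · exact hwv (eq_of_adj_of_adj_of_fst_ne (hS hu hw (Ne.symm hwu)) (hS hu hv huv') hwu1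
      (fun h => huv h.symm))

lemma cliqueResilient_zero (h : s * b + 2 ≤ n) : (DCell n 0).CliqueResilient s b := by
  intro L hL hLb
  refine connectedAfterDeleting_top ?_
  have := Finset.card_biUnion_le_card_mul L id s fun S hS => (hL S hS).card_eq.le
  rw [card_dcellVertex]
  show _ ≤ n
  nlinarith

section SuccStep

variable {L : Finset (Finset (DCellVertex n (m + 1)))}

def cellPart (L : Finset (Finset (DCellVertex n (m + 1)))) (i : Fin (tcell n m + 1)) :
    Finset (Finset (DCellVertex n (m + 1))) :=
  {S ∈ L | ∀ u ∈ S, u.1 = i}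

def cellSlice (L : Finset (Finset (DCellVertex n (m + 1)))) (i : Fin (tcell n m + 1)) :
    Finset (Finset (DCellVertex n m)) :=
  (cellPart L i).image fun S => S.image Prod.snd

def hitCells (L : Finset (Finset (DCellVertex n (m + 1)))) : Finset (Fin (tcell n m + 1)) :=
  L.biUnion fun S => S.image Prod.fst

lemma forall_fst_eq_of_isNClique (hL : ∀ S ∈ L, (DCell n (m + 1)).IsNClique s S) (hs : 3 ≤ s) :
    ∀ S ∈ L, ∀ u ∈ S, ∀ v ∈ S, u.1 = v.1 := fun S hS _ hu _ hv =>
  fst_eq_of_isClique (hL S hS).isClique (hs.trans (hL S hS).card_eq.ge) hu hv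

lemma mk_mem_uncovered_iff (hcell : ∀ S ∈ L, ∀ u ∈ S, ∀ v ∈ S, u.1 = v.1)
    {i : Fin (tcell n m + 1)} {x : DCellVertex n m} :
    ((i, x) : DCellVertex n (m + 1)) ∈ uncovered L ↔ x ∈ uncovered (cellSlice L i) := by
  constructor
  · intro h T hT hx
    obtain ⟨S, hS, rfl⟩ := Finset.mem_image.mp hT
    obtain ⟨hSL, hSi⟩ := Finset.mem_filter.mp hS
    obtain ⟨⟨j, y⟩, hu, rfl⟩ := Finset.mem_image.mp hx
    obtain rfl : j = i := hSi _ hu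
    exact h S hSL hu
  · intro h S hS hx
    exact h _ (Finset.mem_image_of_mem _ (Finset.mem_filter.mpr
      ⟨hS, fun u hu => hcell S hS u hu _ hx⟩)) (Finset.mem_image_of_mem _ hx)

lemma isNClique_of_mem_cellSlice (hL : ∀ S ∈ L, (DCell n (m + 1)).IsNClique s S)
    {i : Fin (tcell n m + 1)} {T : Finset (DCellVertex n m)} (hT : T ∈ cellSlice L i) :
    (DCell n m).IsNClique s T := by
  obtain ⟨S, hS, rfl⟩ := Finset.mem_image.mp hT
  obtain ⟨hSL, hSi⟩ := Finset.mem_filter.mp hS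
  have hinj : Set.InjOn Prod.snd (S : Set (DCellVertex n (m + 1))) := fun u hu v hv h =>
    Prod.ext ((hSi u hu).trans (hSi v hv).symm) h
  refine ⟨?_, (Finset.card_image_of_injOn hinj).trans (hL S hSL).card_eq⟩
  intro _ ha _ hb hne
  obtain ⟨⟨j, x⟩, hu, rfl⟩ := Finset.mem_image.mp (Finset.mem_coe.mp ha)
  obtain ⟨⟨k, y⟩, hv, rfl⟩ := Finset.mem_image.mp (Finset.mem_coe.mp hb)
  obtain rfl : j = i := hSi _ hu
  obtain rfl : k = j := hSi _ hv
  exact adj_mk_mk_same_iff.mp ((hL S hSL).isClique hu hv fun h => hne (congrArg Prod.snd h))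

lemma mem_uncovered_of_fst_notMem_hitCells {v : DCellVertex n (m + 1)} (hv : v.1 ∉ hitCells L) :
    v ∈ uncovered L := fun S hS hvS =>
  hv (Finset.mem_biUnion.mpr ⟨S, hS, Finset.mem_image_of_mem _ hvS⟩)

lemma cellPart_eq_empty (hne : ∀ S ∈ L, S.Nonempty) {j : Fin (tcell n m + 1)}
    (hj : j ∉ hitCells L) : cellPart L j = ∅ := by
  refine Finset.filter_eq_empty_iff.mpr fun S hS hSj => ?_
  obtain ⟨u, hu⟩ := hne S hS
  exact hj (hSj u hu ▸ Finset.mem_biUnion.mpr ⟨S, hS, Finset.mem_image_of_mem _ hu⟩)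

lemma card_image_fst_le_one {S : Finset (DCellVertex n (m + 1))}
    (hS : ∀ u ∈ S, ∀ v ∈ S, u.1 = v.1) : (S.image Prod.fst).card ≤ 1 := by
  refine Finset.card_le_one.mpr fun _ ha _ hb => ?_
  obtain ⟨u, hu, rfl⟩ := Finset.mem_image.mp ha
  obtain ⟨v, hv, rfl⟩ := Finset.mem_image.mp hb
  exact hS u hu v hv

lemma card_hitCells_le (hcell : ∀ S ∈ L, ∀ u ∈ S, ∀ v ∈ S, u.1 = v.1) :
    (hitCells L).card ≤ L.card :=
  (Finset.card_biUnion_le_card_mul _ _ 1 fun S hS => card_image_fst_le_one (hcell S hS)).trans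
    (mul_one _).le

lemma card_erase_hitCells_add_card_cellPart_le (hcell : ∀ S ∈ L, ∀ u ∈ S, ∀ v ∈ S, u.1 = v.1)
    (i : Fin (tcell n m + 1)) : ((hitCells L).erase i).card + (cellPart L i).card ≤ L.card := by
  have hsub : (hitCells L).erase i ⊆
      {S ∈ L | ¬ ∀ u ∈ S, u.1 = i}.biUnion fun S => S.image Prod.fst := by
    intro j hj
    obtain ⟨hji, hj⟩ := Finset.mem_erase.mp hj
    obtain ⟨S, hS, hjS⟩ := Finset.mem_biUnion.mp hj
    obtain ⟨u, hu, rfl⟩ := Finset.mem_image.mp hjS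
    exact Finset.mem_biUnion.mpr
      ⟨S, Finset.mem_filter.mpr ⟨hS, fun h => hji (h u hu)⟩, Finset.mem_image_of_mem _ hu⟩
  have h1 := (Finset.card_le_card hsub).trans (Finset.card_biUnion_le_card_mul _ _ 1
    fun S hS => card_image_fst_le_one (hcell S (Finset.mem_filter.mp hS).1))
  have h2 := Finset.card_filter_add_card_filter_not (s := L) (fun S => ∀ u ∈ S, u.1 = i)
  rw [cellPart]
  omega

lemma reachable_mk_of_card_cellPart_le (hL : ∀ S ∈ L, (DCell n (m + 1)).IsNClique s S)
    (hs : 3 ≤ s) (ih : (DCell n m).CliqueResilient s b) {i : Fin (tcell n m + 1)}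
    (hi : (cellPart L i).card ≤ b) {x y : DCellVertex n m}
    (hx : ((i, x) : DCellVertex n (m + 1)) ∈ uncovered L)
    (hy : ((i, y) : DCellVertex n (m + 1)) ∈ uncovered L) :
    ((DCell n (m + 1)).induce (uncovered L)).Reachable ⟨_, hx⟩ ⟨_, hy⟩ := by
  have hiff : ∀ z, ((i, z) : DCellVertex n (m + 1)) ∈ uncovered L ↔
      z ∈ uncovered (cellSlice L i) := fun _ =>
    mk_mem_uncovered_iff (forall_fst_eq_of_isNClique hL hs)
  have hconn := (ih _ (fun T hT => isNClique_of_mem_cellSlice hL hT)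
    (Finset.card_image_le.trans hi)).1
  have hmaps : Set.MapsTo (cellEmbedding i) (uncovered (cellSlice L i)) (uncovered L) :=
    fun z hz => (hiff z).mpr hz
  exact (hconn.preconnected ⟨x, (hiff x).mp hx⟩ ⟨y, (hiff y).mp hy⟩).map
    (induceHom (cellEmbedding i).toHom hmaps)

lemma exists_adj_fst_notMem_hitCells (hL : ∀ S ∈ L, (DCell n (m + 1)).IsNClique s S)
    (hs : 3 ≤ s) (hb : s * b + 2 ≤ tcell n m) (hLb : L.card ≤ b + 1) {i : Fin (tcell n m + 1)}
    (hi : (cellPart L i).card ≤ b) :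
    ∃ x v, ((i, x) : DCellVertex n (m + 1)) ∈ uncovered L ∧
      (DCell n (m + 1)).Adj (i, x) v ∧ v.1 ∉ hitCells L := by
  classical
  have hcell := forall_fst_eq_of_isNClique hL hs
  -- Otherwise the surviving vertices of cell `i`, at least `t_{m,n} - s * #(cellPart L i)` of them,
  -- have their cross neighbours in distinct hit cells other than `i`, and there are at most
  -- `#L - #(cellPart L i)` of those.
  by_contra! h
  set X := Finset.univ.filter fun x : DCellVertex n m =>
    ((i, x) : DCellVertex n (m + 1)) ∈ uncovered L
  have hX : X.card ≤ ((hitCells L).erase i).card := by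
    refine Finset.card_le_card_of_forall_subsingleton
      (fun x j => ∃ y, (DCell n (m + 1)).Adj (i, x) (j, y)) (fun x hx => ?_) (fun j hj => ?_)
    · obtain ⟨⟨j, y⟩, hadj, hji⟩ := exists_adj_fst_ne ((i, x) : DCellVertex n (m + 1))
      exact ⟨j, Finset.mem_erase.mpr ⟨hji, h x _ (Finset.mem_filter.mp hx).2 hadj⟩, y, hadj⟩
    · rintro x ⟨-, y, hxy⟩ x' ⟨-, y', hxy'⟩
      exact eq_of_adj_mk_of_adj_mk hxy hxy' (Finset.ne_of_mem_erase hj).symm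
  have hXc : tcell n m ≤ X.card + s * (cellPart L i).card := by
    have hsub : Xᶜ ⊆ (cellSlice L i).biUnion id := by
      intro x hx
      simp only [X, Finset.mem_compl, Finset.mem_filter, Finset.mem_univ, true_and,
        mk_mem_uncovered_iff hcell, mem_uncovered, not_forall, not_not] at hx
      obtain ⟨T, hT, hxT⟩ := hx
      exact Finset.mem_biUnion.mpr ⟨T, hT, hxT⟩
    have h1 := Finset.card_le_card hsub
    have h2 := Finset.card_biUnion_le_card_mul (cellSlice L i) id s fun T hT =>
      (isNClique_of_mem_cellSlice hL hT).card_eq.le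
    have h3 : (cellSlice L i).card ≤ (cellPart L i).card := Finset.card_image_le
    have h4 := Finset.card_add_card_compl X
    rw [card_dcellVertex] at h4
    nlinarith [Nat.mul_le_mul_right s h3]
  have := card_erase_hitCells_add_card_cellPart_le hcell i
  nlinarith

lemma exists_reachable_fst_notMem_hitCells (hL : ∀ S ∈ L, (DCell n (m + 1)).IsNClique s S)
    (hs : 3 ≤ s) (hb : s * b + 2 ≤ tcell n m) (hLb : L.card ≤ b + 1)
    (ih : (DCell n m).CliqueResilient s b) {u : DCellVertex n (m + 1)} (hu : u ∈ uncovered L) :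
    ∃ v, ∃ hv : v ∈ uncovered L, v.1 ∉ hitCells L ∧
      ((DCell n (m + 1)).induce (uncovered L)).Reachable ⟨u, hu⟩ ⟨v, hv⟩ := by
  obtain ⟨i, x⟩ := u
  by_cases hi : (cellPart L i).card ≤ b
  · obtain ⟨x', v, hx', hadj, hv⟩ := exists_adj_fst_notMem_hitCells hL hs hb hLb hi
    exact ⟨v, mem_uncovered_of_fst_notMem_hitCells hv, hv,
      (reachable_mk_of_card_cellPart_le hL hs ih hi hu hx').trans (Adj.reachable hadj)⟩
  -- Otherwise every member of `L` lies in cell `i`, so the cross neighbour of `(i, x)` lies in an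
  -- untouched cell.
  have := card_erase_hitCells_add_card_cellPart_le (forall_fst_eq_of_isNClique hL hs) i
  have hfree : (hitCells L).erase i = ∅ := Finset.card_eq_zero.mp (by omega)
  obtain ⟨v, hadj, hvi⟩ := exists_adj_fst_ne ((i, x) : DCellVertex n (m + 1))
  have hv : v.1 ∉ hitCells L := fun h => by
    simpa [hfree] using Finset.mem_erase.mpr ⟨hvi, h⟩
  exact ⟨v, mem_uncovered_of_fst_notMem_hitCells hv, hv, Adj.reachable hadj⟩

lemma reachable_of_fst_notMem_hitCells (hL : ∀ S ∈ L, (DCell n (m + 1)).IsNClique s S)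
    (hs : 3 ≤ s) (ih : (DCell n m).CliqueResilient s b) {u v : DCellVertex n (m + 1)}
    (hu : u.1 ∉ hitCells L) (hv : v.1 ∉ hitCells L) :
    ((DCell n (m + 1)).induce (uncovered L)).Reachable
      ⟨u, mem_uncovered_of_fst_notMem_hitCells hu⟩
      ⟨v, mem_uncovered_of_fst_notMem_hitCells hv⟩ := by
  have hne : ∀ S ∈ L, S.Nonempty := fun S hS =>
    Finset.card_pos.mp (by rw [(hL S hS).card_eq]; omega)
  have hsmall : ∀ {j}, j ∉ hitCells L → (cellPart L j).card ≤ b := fun hj => by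
    rw [cellPart_eq_empty hne hj]
    exact Nat.zero_le _
  obtain ⟨i, x⟩ := u
  obtain ⟨j, y⟩ := v
  by_cases hij : i = j
  · subst hij
    exact reachable_mk_of_card_cellPart_le hL hs ih (hsmall hu) _ _
  obtain ⟨x', y', hadj⟩ := exists_adj_mk_mk_of_ne hij
  have hx' := mem_uncovered_of_fst_notMem_hitCells (v := (i, x')) hu
  have hy' := mem_uncovered_of_fst_notMem_hitCells (v := (j, y')) hv
  have hstep : ((DCell n (m + 1)).induce (uncovered L)).Adj ⟨_, hx'⟩ ⟨_, hy'⟩ := hadj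
  exact (reachable_mk_of_card_cellPart_le hL hs ih (hsmall hu) _ hx').trans
    (hstep.reachable.trans (reachable_mk_of_card_cellPart_le hL hs ih (hsmall hv) hy' _))

theorem cliqueResilient_succ (hs : 3 ≤ s) (hb : s * b + 2 ≤ tcell n m)
    (ih : (DCell n m).CliqueResilient s b) : (DCell n (m + 1)).CliqueResilient s (b + 1) := by
  intro L hL hLb
  have hfree : 1 < (Finset.univ \ hitCells L).card := by
    rw [Finset.card_sdiff_of_subset (Finset.subset_univ _), Finset.card_univ, Fintype.card_fin]
    have := card_hitCells_le (forall_fst_eq_of_isNClique hL hs)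
    have : b ≤ s * b := Nat.le_mul_of_pos_left b (by omega)
    omega
  obtain ⟨g₁, hg₁, g₂, hg₂, hg⟩ := Finset.one_lt_card.mp hfree
  replace hg₁ := (Finset.mem_sdiff.mp hg₁).2
  replace hg₂ := (Finset.mem_sdiff.mp hg₂).2
  obtain ⟨x⟩ : Nonempty (DCellVertex n m) :=
    Fintype.card_pos_iff.mp (by rw [card_dcellVertex]; omega)
  refine ⟨(connected_iff_exists_forall_reachable _).mpr
      ⟨⟨(g₁, x), mem_uncovered_of_fst_notMem_hitCells hg₁⟩, fun ⟨u, hu⟩ => ?_⟩,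
    ⟨(g₁, x), mem_uncovered_of_fst_notMem_hitCells hg₁, (g₂, x),
      mem_uncovered_of_fst_notMem_hitCells hg₂, fun h => hg (congrArg Prod.fst h)⟩⟩
  obtain ⟨v, hv, hv1, huv⟩ := exists_reachable_fst_notMem_hitCells hL hs hb hLb ih hu
  exact (reachable_of_fst_notMem_hitCells hL hs ih hg₁ hv1).trans huv.symm

end SuccStep

theorem cliqueResilient (hs : 3 ≤ s) (hsn : s < n) :
    ∀ m, (DCell n m).CliqueResilient s ((n + s - 2) / s - 1 + m)
  | 0 => cliqueResilient_zero (mul_add_two_le_tcell (by omega) hsn 0)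
  | m + 1 => cliqueResilient_succ hs (mul_add_two_le_tcell (by omega) hsn m)
      (cliqueResilient hs hsn m)

def baseEmbedding : ∀ m, (⊤ : SimpleGraph (Fin n)) ↪g DCell n m
  | 0 => Embedding.refl
  | m + 1 => (cellEmbedding 0).comp (baseEmbedding m)

-- The copy of `K_n` on the labels `0…010…0x` with the `1` in coordinate `m - j`: its vertex
-- `0…010…0` is the neighbour of `0…0` on level `m - j`.
def sideEmbedding (hn : 0 < n) : ∀ m, Fin m → (⊤ : SimpleGraph (Fin n)) ↪g DCell n m
  | m + 1, ⟨0, _⟩ =>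
    (cellEmbedding ⟨1, by have := le_tcell (n := n) m; omega⟩).comp (baseEmbedding m)
  | m + 1, ⟨j + 1, hj⟩ => (cellEmbedding 0).comp (sideEmbedding hn m ⟨j, by omega⟩)

lemma dcellCode_baseEmbedding : ∀ m (x : Fin n), DCellCode n m (baseEmbedding m x) = x
  | 0, _ => rfl
  | m + 1, x => by
    show DCellCode n m (baseEmbedding m x) + ((0 : Fin (tcell n m + 1)) : ℕ) * tcell n m = x
    simp [dcellCode_baseEmbedding m x]

lemma sideEmbedding_ne_baseEmbedding (hn : 0 < n) :
    ∀ m (j : Fin m) (x y : Fin n), sideEmbedding hn m j x ≠ baseEmbedding m y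
  | m + 1, ⟨0, _⟩, x, y, h =>
    absurd (congrArg (fun v : DCellVertex n (m + 1) => (v.1 : ℕ)) h) one_ne_zero
  | m + 1, ⟨j + 1, hj⟩, x, y, h =>
    sideEmbedding_ne_baseEmbedding hn m ⟨j, by omega⟩ x y (congrArg Prod.snd h)

lemma adj_baseEmbedding_zero (hn : 0 < n) : ∀ m {v : DCellVertex n m},
    (DCell n m).Adj (baseEmbedding m ⟨0, hn⟩) v →
      (∃ x, v = baseEmbedding m x) ∨ ∃ j, v = sideEmbedding hn m j ⟨0, hn⟩
  | 0, v, _ => Or.inl ⟨v, rfl⟩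
  | m + 1, ⟨i, y⟩, h => by
    by_cases hi : i = 0
    · subst hi
      rcases adj_baseEmbedding_zero hn m (adj_mk_mk_same_iff.mp h) with ⟨x, rfl⟩ | ⟨j, rfl⟩
      · exact Or.inl ⟨x, rfl⟩
      · exact Or.inr ⟨j.succ, rfl⟩
    have h1 : ((⟨1, by have := le_tcell (n := n) m; omega⟩ : Fin (tcell n m + 1))) ≠ 0 :=
      fun h => by simp [Fin.ext_iff] at h
    have hside : (DCell n (m + 1)).Adj (baseEmbedding (m + 1) ⟨0, hn⟩)
        (sideEmbedding hn (m + 1) ⟨0, m.succ_pos⟩ ⟨0, hn⟩) :=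
      (adj_mk_mk_iff_of_ne (Ne.symm h1)).mpr
        (Or.inl ⟨by simp, by simp [dcellCode_baseEmbedding], by simp [dcellCode_baseEmbedding]⟩)
    exact Or.inr ⟨⟨0, m.succ_pos⟩, eq_of_adj_of_adj_of_fst_ne h hside hi h1⟩

theorem exists_isStructureCut (hs : 0 < s) (hsn : s < n) (m : ℕ) :
    ∃ F, (DCell n m).IsStructureCut (⊤ : SimpleGraph (Fin s)) F ∧
      F.card ≤ (n + s - 2) / s + m := by
  have hn : 0 < n := hs.trans hsn
  set baseCliques := (Finset.range ((n + s - 2) / s)).image fun r =>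
    (coverBlock hsn r).map (baseEmbedding m).toEmbedding
  set sideCliques := Finset.univ.image fun j : Fin m =>
    (Finset.univ.map (Fin.castLEEmb hsn.le)).map (sideEmbedding hn m j).toEmbedding
  have hcliques : ∀ S ∈ baseCliques ∪ sideCliques, (DCell n m).IsNClique s S := by
    intro S hS
    rcases Finset.mem_union.mp hS with h | h <;> obtain ⟨_, -, rfl⟩ := Finset.mem_image.mp h
    · exact isNClique_map_top _ (card_coverBlock hsn _)
    · exact isNClique_map_top _ (by simp)
  have hz : baseEmbedding m ⟨0, hn⟩ ∈ uncovered (baseCliques ∪ sideCliques) := by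
    intro S hS hzS
    rcases Finset.mem_union.mp hS with h | h <;> obtain ⟨_, -, rfl⟩ := Finset.mem_image.mp h
    · obtain ⟨x, hx, hxz⟩ := Finset.mem_map.mp hzS
      exact val_ne_zero_of_mem_coverBlock hx (congrArg Fin.val ((baseEmbedding m).injective hxz))
    · obtain ⟨x, -, hxz⟩ := Finset.mem_map.mp hzS
      exact sideEmbedding_ne_baseEmbedding hn m _ _ _ hxz
  have hN : ∀ v, (DCell n m).Adj (baseEmbedding m ⟨0, hn⟩) v →
      v ∉ uncovered (baseCliques ∪ sideCliques) := by
    intro v hv hunc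
    rcases adj_baseEmbedding_zero hn m hv with ⟨x, rfl⟩ | ⟨j, rfl⟩
    · obtain ⟨r, hr, hxr⟩ := exists_mem_coverBlock hs hsn (x := x)
        fun h => hv.ne (congrArg _ (Fin.ext h.symm))
      exact hunc _ (Finset.mem_union_left _ (Finset.mem_image_of_mem _ (Finset.mem_range.mpr hr)))
        (Finset.mem_map_of_mem _ hxr)
    · exact hunc _ (Finset.mem_union_right _ (Finset.mem_image_of_mem _ (Finset.mem_univ j)))
        (Finset.mem_map_of_mem _ (Finset.mem_map_of_mem _ (Finset.mem_univ (⟨0, hs⟩ : Fin s))))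
  obtain ⟨F, hF, hFL⟩ := exists_isStructureCut_of_isolated hcliques hz hN
  refine ⟨F, hF, hFL.trans ((Finset.card_union_le _ _).trans (add_le_add ?_ ?_))⟩
  · exact Finset.card_image_le.trans (Finset.card_range _).le
  · exact Finset.card_image_le.trans (by simp)

end DCell

theorem dcell_complete_structConn_eq_general (m n s : ℕ) (hs1 : 3 ≤ s)
    (hs2 : s ≤ n - 1) :
    (DCell n m).structConn (⊤ : SimpleGraph (Fin s)) = (n + s - 2) / s + m := by
  have hsn : s < n := by omega
  refine structConn_eq_of_forall_le (DCell.exists_isStructureCut (by omega) hsn m) fun F hF => ?_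
  have hc : 1 ≤ (n + s - 2) / s := (Nat.one_le_div_iff (by omega)).mpr (by omega)
  have := (DCell.cliqueResilient hs1 hsn m).lt_card hF
  omega

/-- For all integers `m ≥ 0`, `n ≥ 2` and `3 ≤ s ≤ n - 1`,
`κ(D_{m,n}; K_s) = ⌈(n-1)/s⌉ + m`. -/
theorem dcell_complete_structConn_eq (m n s : ℕ) (hn : 2 ≤ n) (hs1 : 3 ≤ s)
    (hs2 : s ≤ n - 1) :
    (DCell n m).structConn (⊤ : SimpleGraph (Fin s)) = (n + s - 2) / s + m :=
  dcell_complete_structConn_eq_general m n s hs1 hs2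
end
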